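/- Let D be a directed acyclic graph with s, t ∈ V(D), and let G be the directed bipartite graph with vertex set {v_L, v_R : v ∈ V(D)} and edges u_L→v_R and u_R→v_L for each edge u→v of D. Let x : E(D) → ℝ with x ≥ 0 satisfy Σ_{e ∈ P} x(e) ≥ 1 for every odd-length s→t path P in D. Define Y : E(G) → ℝ by Y(u_L v_R) = Y(u_R v_L) = x(uv) for every edge uv ∈ E(D). Then Σ_{e ∈ Q} Y(e) ≥ 1 for every directed s_L→t_R path Q in G. -/

import Mathlib

/-- A (simple) directed path in the directed graph `G`, represented as a nonempty
list of pairwise distinct vertices in which every consecutive pair is an edge of `G`. -/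
def IsPath {V : Type*} (G : V → V → Prop) (p : List V) : Prop :=
  p ≠ [] ∧ p.Chain' G ∧ p.Nodup

/-- `p` is a directed path from `u` to `v` in `G`. -/
def IsPathFrom {V : Type*} (G : V → V → Prop) (u v : V) (p : List V) : Prop :=
  IsPath G p ∧ p.head? = some u ∧ p.getLast? = some v

/-- The length (number of edges) of a path, given as its list of vertices. -/
def pathLen {V : Type*} (p : List V) : ℕ := p.length - 1

/-- The list of directed edges traversed by a path. -/
def edgesOf {V : Type*} (p : List V) : List (V × V) := p.zip p.tail

/-- A directed graph is acyclic (a DAG) if no vertex lies on a directed cycle. -/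
def Acyclic {V : Type*} (G : V → V → Prop) : Prop :=
  ∀ v, ¬ Relation.TransGen G v v

/-- The graph obtained from `G` by deleting the vertex set `M`. -/
def delV {V : Type*} (G : V → V → Prop) (M : Set V) : V → V → Prop :=
  fun a b => G a b ∧ a ∉ M ∧ b ∉ M

/-- The bipartite double cover of a directed graph `D`: vertices `Sum.inl v`
(playing the role of `v_L`) and `Sum.inr v` (playing the role of `v_R`), with
edges `u_L → v_R` and `u_R → v_L` for every edge `u → v` of `D`. -/
def biparLift {V : Type*} (D : V → V → Prop) : V ⊕ V → V ⊕ V → Prop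
  | Sum.inl u, Sum.inr v => D u v
  | Sum.inr u, Sum.inl v => D u v
  | _, _ => False

/-!
Forgetting sides maps an `s_L → t_R` path of the double cover onto an `s → t` walk of `D` with the
same number of edges and the same weight. Since `D` is acyclic this walk is a path, and it is odd
because every edge of the cover switches side while `s_L` and `t_R` lie on different sides.
-/

namespace List

theorem IsChain.rel_of_mem_edgesOf {α : Type*} {R : α → α → Prop} {l : List α}
    (hl : l.IsChain R) {a b : α} (hab : (a, b) ∈ edgesOf l) : R a b := by
  induction hl with
  | nil | singleton => simp [edgesOf] at hab
  | cons_cons hr _ ih =>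
    simp only [edgesOf, tail_cons, zip_cons_cons, mem_cons, Prod.mk.injEq] at hab ih
    rcases hab with ⟨rfl, rfl⟩ | hab
    · exact hr
    · exact ih hab

theorem IsChain.getLast_eq_add_length {α : Type*} {R : α → α → Prop} {f : α → ZMod 2}
    (hf : ∀ a b, R a b → f b = f a + 1) {a : α} {l : List α} (hl : (a :: l).IsChain R) :
    f ((a :: l).getLast (cons_ne_nil a l)) = f a + l.length := by
  induction l generalizing a with
  | nil => simp
  | cons b l ih =>
    rw [isChain_cons_cons] at hl
    rw [getLast_cons_cons, ih hl.2, hf a b hl.1, length_cons, Nat.cast_succ]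
    ring

theorem IsChain.nodup_of_acyclic {V : Type*} {D : V → V → Prop} (hD : Acyclic D) {p : List V}
    (hp : p.IsChain D) : p.Nodup := by
  refine (hp.imp fun _ _ => Relation.TransGen.single).pairwise.imp ?_
  rintro a _ h rfl
  exact hD a h

end List

theorem edgesOf_map {α β : Type*} (f : α → β) (l : List α) :
    edgesOf (l.map f) = (edgesOf l).map (Prod.map f f) := by
  rw [edgesOf, edgesOf, ← List.map_tail, List.zip_map]

theorem isPathFrom_of_isChain {V : Type*} {D : V → V → Prop} (hD : Acyclic D) {u v : V}
    {p : List V} (hp : p.IsChain D) (hu : p.head? = some u) (hv : p.getLast? = some v) :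
    IsPathFrom D u v p :=
  ⟨⟨by rintro rfl; simp at hu, hp, hp.nodup_of_acyclic hD⟩, hu, hv⟩

section biparLift

variable {V : Type*} {D : V → V → Prop}

theorem biparLift.elim_id_id {a b : V ⊕ V} (h : biparLift D a b) :
    D (Sum.elim id id a) (Sum.elim id id b) := by
  rcases a with u | u <;> rcases b with v | v <;> first | exact h | exact h.elim

theorem biparLift.elim_zero_one_eq_add_one {a b : V ⊕ V} (h : biparLift D a b) :
    Sum.elim (0 : V → ZMod 2) 1 b = Sum.elim (0 : V → ZMod 2) 1 a + 1 := by
  rcases a with u | u <;> rcases b with v | v <;> first | exact h.elim | rfl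

theorem List.IsChain.odd_pathLen_of_biparLift {s t : V} {q : List (V ⊕ V)}
    (hq : q.IsChain (biparLift D)) (hs : q.head? = some (Sum.inl s))
    (ht : q.getLast? = some (Sum.inr t)) : Odd (pathLen q) := by
  obtain ⟨l, rfl⟩ := List.head?_eq_some_iff.mp hs
  rw [List.getLast?_eq_some_getLast (List.cons_ne_nil _ _), Option.some_inj] at ht
  have := hq.getLast_eq_add_length (fun _ _ h => biparLift.elim_zero_one_eq_add_one h)
  rw [ht] at this
  simpa [pathLen, eq_comm, ZMod.natCast_eq_one_iff_odd] using this

theorem List.IsChain.sum_edgesOf_biparLift {x : V × V → ℝ} {Y : (V ⊕ V) × (V ⊕ V) → ℝ}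
    (hY : ∀ u v, D u v → Y (Sum.inl u, Sum.inr v) = x (u, v) ∧
      Y (Sum.inr u, Sum.inl v) = x (u, v))
    {q : List (V ⊕ V)} (hq : q.IsChain (biparLift D)) :
    ((edgesOf q).map Y).sum = ((edgesOf (q.map (Sum.elim id id))).map x).sum := by
  rw [edgesOf_map, List.map_map]
  congr 1
  refine List.map_congr_left fun ⟨a, b⟩ hab => ?_
  have hD := hq.rel_of_mem_edgesOf hab
  rcases a with u | u <;> rcases b with v | v
  · exact hD.elim
  · exact (hY u v hD).1
  · exact (hY u v hD).2
  · exact hD.elim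

end biparLift

theorem lifted_fractional_solution_feasible {V : Type*} (D : V → V → Prop)
    (hD : Acyclic D) (s t : V)
    (x : V × V → ℝ)
    (hx : ∀ p, IsPathFrom D s t p → Odd (pathLen p) →
      1 ≤ ((edgesOf p).map x).sum)
    (Y : (V ⊕ V) × (V ⊕ V) → ℝ)
    (hY : ∀ u v, D u v → Y (Sum.inl u, Sum.inr v) = x (u, v) ∧
      Y (Sum.inr u, Sum.inl v) = x (u, v)) :
    ∀ q, IsPathFrom (biparLift D) (Sum.inl s) (Sum.inr t) q →
      1 ≤ ((edgesOf q).map Y).sum := by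
  rintro q ⟨⟨-, hq, -⟩, hs, ht⟩
  have hp : IsPathFrom D s t (q.map (Sum.elim id id)) :=
    isPathFrom_of_isChain hD
      (List.isChain_map_of_isChain (Sum.elim id id) (fun _ _ => biparLift.elim_id_id) hq)
      (by simp [hs]) (by simp [ht])
  have hodd : Odd (pathLen (q.map (Sum.elim id id))) := by
    simpa [pathLen] using hq.odd_pathLen_of_biparLift hs ht
  exact (hq.sum_edgesOf_biparLift hY).symm ▸ hx _ hp hodd
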